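/- arXiv:2004.06326 — 4 statements merged into one kernel-verified Lean document; each statement's English description precedes it below -/
import Mathlib

section
/- Let sigma0, sigmaL2, sigmaB2 be positive reals, let e : N -> Prop be decidable, let h : N -> N count the events (h(0) = 0; h(k) = h(k-1) + 1 if e(k) holds, else h(k-1)), and let V : N -> R satisfy V(0) = sigma0, and for k >= 1, V(k) = V(k-1)/(1 + V(k-1)/sigmaL2 + V(k-1)/sigmaB2) if e(k) holds, else V(k) = V(k-1). Then for every k, the relative precisions deltaL(k) = V(k)/sigmaL2 and deltaB(k) = V(k)/sigmaB2 satisfy the closed formulas deltaL(k) = sigma0/(sigmaL2 + h(k) * sigma0 * (1 + sigmaL2/sigmaB2)) and deltaB(k) = sigma0/(sigmaB2 + h(k) * sigma0 * (1 + sigmaB2/sigmaL2)). -/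
/-! The update `V ↦ V / (1 + V / σL² + V / σB²)` adds `1/σL² + 1/σB²` to the precision `1/V`,
so `1/V(k) = 1/σ₀ + h(k) (1/σL² + 1/σB²)`; dividing `V(k)` by `σL²` or `σB²` gives the closed
forms. -/

theorem inv_div_one_add_mul_inv {a c : ℝ} (ha : a ≠ 0) :
    a⁻¹ / (1 + a⁻¹ * c) = (a + c)⁻¹ := by
  rw [← mul_div_mul_left _ _ ha, mul_inv_cancel₀ ha, mul_add, ← mul_assoc, mul_inv_cancel₀ ha,
    mul_one, one_mul, one_div]

theorem variance_eq_inv_precision {v₀ c : ℝ} (hv₀ : 0 < v₀) (hc : 0 ≤ c)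
    (e : ℕ → Prop) [DecidablePred e]
    (h : ℕ → ℕ) (hh0 : h 0 = 0)
    (hhk : ∀ k : ℕ, 1 ≤ k → h k = if e k then h (k - 1) + 1 else h (k - 1))
    (V : ℕ → ℝ) (hV0 : V 0 = v₀)
    (hVk : ∀ k : ℕ, 1 ≤ k → V k = if e k then V (k - 1) / (1 + V (k - 1) * c) else V (k - 1))
    (k : ℕ) : V k = (v₀⁻¹ + h k * c)⁻¹ := by
  induction k with
  | zero => simp [hV0, hh0]
  | succ n ih =>
    have hpos : 0 < v₀⁻¹ + h n * c := by positivity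
    rw [hVk (n + 1) n.succ_pos, hhk (n + 1) n.succ_pos, Nat.add_sub_cancel, ih]
    split_ifs
    · rw [inv_div_one_add_mul_inv hpos.ne']
      push_cast
      ring
    · rfl

theorem inv_precision_div {s₀ L B : ℝ} (n : ℝ) (hs₀ : s₀ ≠ 0) (hL : L ≠ 0) :
    (s₀⁻¹ + n * (L⁻¹ + B⁻¹))⁻¹ / L = s₀ / (L + n * s₀ * (1 + L / B)) := by
  field_simp

/-- Closed forms for the relative precisions deltaL(k) = V(k)/sigmaL2 and
deltaB(k) = V(k)/sigmaB2 in the Bayesian PSO variant. -/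
theorem delta_closed_form (sigma0 sigmaL2 sigmaB2 : ℝ)
    (h0 : 0 < sigma0) (hL : 0 < sigmaL2) (hB : 0 < sigmaB2)
    (e : ℕ → Prop) [DecidablePred e]
    (h : ℕ → ℕ) (hh0 : h 0 = 0)
    (hhk : ∀ k : ℕ, 1 ≤ k → h k = if e k then h (k - 1) + 1 else h (k - 1))
    (V : ℕ → ℝ) (hV0 : V 0 = sigma0)
    (hVk : ∀ k : ℕ, 1 ≤ k → V k =
      if e k then V (k - 1) / (1 + V (k - 1) / sigmaL2 + V (k - 1) / sigmaB2)
      else V (k - 1)) :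
    ∀ k : ℕ,
      V k / sigmaL2 =
        sigma0 / (sigmaL2 + (h k : ℝ) * sigma0 * (1 + sigmaL2 / sigmaB2)) ∧
      V k / sigmaB2 =
        sigma0 / (sigmaB2 + (h k : ℝ) * sigma0 * (1 + sigmaB2 / sigmaL2)) := by
  have hVk' : ∀ k : ℕ, 1 ≤ k → V k = if e k
      then V (k - 1) / (1 + V (k - 1) * (sigmaL2⁻¹ + sigmaB2⁻¹)) else V (k - 1) := by
    intro k hk
    rw [hVk k hk]
    split_ifs <;> ring
  intro k
  have hV := variance_eq_inv_precision h0 (by positivity) e h hh0 hhk V hV0 hVk' k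
  refine ⟨?_, ?_⟩
  · rw [hV, inv_precision_div _ h0.ne' hL.ne']
  · rw [hV, add_comm sigmaL2⁻¹, inv_precision_div _ h0.ne' hB.ne']
end

section
/- Let sigmaL2, sigmaB2 be positive reals and sigma0 > 0. Let V : N -> R satisfy V(0) = sigma0 and V(k) = V(k-1)/(1 + deltaL(k-1) + deltaB(k-1)) for k >= 1, where deltaL(j) = V(j)/sigmaL2 and deltaB(j) = V(j)/sigmaB2. Let l, b, mu : N -> R with mu(k) = (mu(k-1) + deltaL(k-1) * l(k-1) + deltaB(k-1) * b(k-1))/(1 + deltaL(k-1) + deltaB(k-1)) for k >= 1, and set muV(k) = mu(k) - mu(k-1). Then for every k >= 2: muV(k) = ((1 - deltaL(k-1) - deltaB(k-1))/(1 + deltaL(k-1) + deltaB(k-1))) * muV(k-1) + (deltaL(k-1)/(1 + deltaL(k-1) + deltaB(k-1))) * (l(k-1) - l(k-2)) + (deltaB(k-1)/(1 + deltaL(k-1) + deltaB(k-1))) * (b(k-1) - b(k-2)). -/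
/-!
Write `E = 1 + δL + δB` for the precision factor of a step. Since the variance shrinks by `E`,
the next step's relative precisions are `δL / E` and `δB / E`, so `1 - δL' - δB' = 1 / E`:
the Bayes update of the mean is then the convex combination
`μ' = (1 - δL' - δB') μ + δL' l + δB' b` in the *new* precisions. Subtracting this from the next
update `E' μ'' = μ' + δL' l' + δB' b'` gives the momentum form of `μ'' - μ'`.
-/

section BayesianUpdate

variable {sL sB : ℝ}

theorem posteriorVariance_pos (hL : 0 < sL) (hB : 0 < sB) {V : ℕ → ℝ} (h0 : 0 < V 0)
    (hV : ∀ k, V (k + 1) = V k / (1 + V k / sL + V k / sB)) (k : ℕ) : 0 < V k := by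
  induction k with
  | zero => exact h0
  | succ k ih => rw [hV k]; positivity

theorem one_sub_relPrecision_posterior {v : ℝ} (hE : 1 + v / sL + v / sB ≠ 0) :
    1 - v / (1 + v / sL + v / sB) / sL - v / (1 + v / sL + v / sB) / sB =
      1 / (1 + v / sL + v / sB) := by
  field_simp
  ring

theorem bayesMean_eq_convexCombination_posterior {v μ l b : ℝ}
    (hE : 1 + v / sL + v / sB ≠ 0) :
    (μ + v / sL * l + v / sB * b) / (1 + v / sL + v / sB) =
      (1 - v / (1 + v / sL + v / sB) / sL - v / (1 + v / sL + v / sB) / sB) * μ +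
        v / (1 + v / sL + v / sB) / sL * l + v / (1 + v / sL + v / sB) / sB * b := by
  rw [one_sub_relPrecision_posterior hE]
  field_simp

end BayesianUpdate

theorem bayesMean_sub_eq_momentum_form {dL dB μ₀ μ₁ μ₂ l₀ l₁ b₀ b₁ : ℝ}
    (hE : 1 + dL + dB ≠ 0)
    (hμ₁ : μ₁ = (1 - dL - dB) * μ₀ + dL * l₀ + dB * b₀)
    (hμ₂ : μ₂ = (μ₁ + dL * l₁ + dB * b₁) / (1 + dL + dB)) :
    μ₂ - μ₁ = (1 - dL - dB) / (1 + dL + dB) * (μ₁ - μ₀) +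
      dL / (1 + dL + dB) * (l₁ - l₀) + dB / (1 + dL + dB) * (b₁ - b₀) := by
  rw [hμ₂, hμ₁]
  field_simp
  ring

/-- The velocity mean muV(k) equals a momentum term plus terms proportional to
the change of the personal and global best positions over the last two steps. -/
theorem velocity_mean_momentum_form (sigma0 sigmaL2 sigmaB2 : ℝ)
    (h0 : 0 < sigma0) (hL : 0 < sigmaL2) (hB : 0 < sigmaB2)
    (V : ℕ → ℝ) (hV0 : V 0 = sigma0)
    (hVk : ∀ k : ℕ, 1 ≤ k →
      V k = V (k - 1) / (1 + V (k - 1) / sigmaL2 + V (k - 1) / sigmaB2))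
    (l b mu : ℕ → ℝ)
    (hmu : ∀ k : ℕ, 1 ≤ k →
      mu k = (mu (k - 1) + (V (k - 1) / sigmaL2) * l (k - 1) +
          (V (k - 1) / sigmaB2) * b (k - 1)) /
        (1 + V (k - 1) / sigmaL2 + V (k - 1) / sigmaB2))
    (muV : ℕ → ℝ) (hmuV : ∀ k : ℕ, 1 ≤ k → muV k = mu k - mu (k - 1)) :
    ∀ k : ℕ, 2 ≤ k →
      muV k =
        ((1 - V (k - 1) / sigmaL2 - V (k - 1) / sigmaB2) /
            (1 + V (k - 1) / sigmaL2 + V (k - 1) / sigmaB2)) * muV (k - 1) +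
          ((V (k - 1) / sigmaL2) /
              (1 + V (k - 1) / sigmaL2 + V (k - 1) / sigmaB2)) *
            (l (k - 1) - l (k - 2)) +
          ((V (k - 1) / sigmaB2) /
              (1 + V (k - 1) / sigmaL2 + V (k - 1) / sigmaB2)) *
            (b (k - 1) - b (k - 2)) := by
  have hV (k : ℕ) := hVk (k + 1) k.succ_pos
  have hmu (k : ℕ) := hmu (k + 1) k.succ_pos
  have hmuV (k : ℕ) := hmuV (k + 1) k.succ_pos
  simp only [Nat.add_sub_cancel] at hV hmu hmuV
  have hE (k : ℕ) : 1 + V k / sigmaL2 + V k / sigmaB2 ≠ 0 := by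
    have := posteriorVariance_pos hL hB (hV0 ▸ h0) hV k
    positivity
  intro k hk
  obtain ⟨j, rfl⟩ := Nat.exists_eq_add_of_le' hk
  simp only [show j + 2 - 1 = j + 1 from rfl, show j + 2 - 2 = j from rfl]
  rw [hmuV (j + 1), hmuV j]
  refine bayesMean_sub_eq_momentum_form (hE (j + 1)) ?_ (hmu (j + 1))
  rw [hmu j, hV j]
  exact bayesMean_eq_convexCombination_posterior (hE j)
end

section
/- Let sigmaL2, sigmaB2 be positive reals and sigma0 > 0. Let V : N -> R satisfy V(0) = sigma0 and V(k) = V(k-1)/(1 + deltaL(k-1) + deltaB(k-1)) for k >= 1, where deltaL(j) = V(j)/sigmaL2 and deltaB(j) = V(j)/sigmaB2. Let l, b, mu : N -> R with mu(k) = (mu(k-1) + deltaL(k-1) * l(k-1) + deltaB(k-1) * b(k-1))/(1 + deltaL(k-1) + deltaB(k-1)) for k >= 1, and set muV(k) = mu(k) - mu(k-1). Then for every k >= 2: muV(k) = (1/(1 + deltaL(k-1) + deltaB(k-1))) * muV(k-1) + (deltaL(k-1)/(1 + deltaL(k-1) + deltaB(k-1))) * ((l(k-1) - mu(k-1)) -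 (l(k-2) - mu(k-2))) + (deltaB(k-1)/(1 + deltaL(k-1) + deltaB(k-1))) * ((b(k-1) - mu(k-1)) - (b(k-2) - mu(k-2))). -/
/-!
Write `A k = V k / σL`, `B k = V k / σB`, `D k = 1 + A k + B k`. One Bayes step moves the mean by
`(A k (l k - μ k) + B k (b k - μ k)) / D k`, and the variance recursion gives `A k / D k = A (k + 1)`
(likewise for `B`), so `μ (k + 1) - μ k = A (k + 1) (l k - μ k) + B (k + 1) (b k - μ k)`.
Subtracting `1 / D (k + 1)` times this from the next increment leaves exactly the changes of the
distances `l - μ` and `b - μ`.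
-/

lemma gaussian_update_sub_mean {μ x y a c : ℝ} (h : 1 + a + c ≠ 0) :
    (μ + a * x + c * y) / (1 + a + c) - μ = (a * (x - μ) + c * (y - μ)) / (1 + a + c) := by
  field_simp
  ring

lemma update_eq_momentum_add_distance_changes (A B x y x' y' : ℝ) :
    (A * x' + B * y') / (1 + A + B) =
      1 / (1 + A + B) * (A * x + B * y) + A / (1 + A + B) * (x' - x) +
        B / (1 + A + B) * (y' - y) := by
  ring

section BayesianUpdate

variable {σL σB : ℝ} {V : ℕ → ℝ}

lemma one_add_div_add_div_pos {v : ℝ} (hv : 0 ≤ v) (hL : 0 < σL) (hB : 0 < σB) :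
    0 < 1 + v / σL + v / σB := by
  positivity

lemma variance_pos (h0 : 0 < V 0) (hL : 0 < σL) (hB : 0 < σB)
    (hV : ∀ k, V (k + 1) = V k / (1 + V k / σL + V k / σB)) (k : ℕ) : 0 < V k := by
  induction k with
  | zero => exact h0
  | succ k ih =>
    rw [hV]
    exact div_pos ih (one_add_div_add_div_pos ih.le hL hB)

lemma mean_succ_sub (h0 : 0 < V 0) (hL : 0 < σL) (hB : 0 < σB)
    (hV : ∀ k, V (k + 1) = V k / (1 + V k / σL + V k / σB)) {l b μ : ℕ → ℝ}
    (hμ : ∀ k, μ (k + 1) =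
      (μ k + V k / σL * l k + V k / σB * b k) / (1 + V k / σL + V k / σB)) (k : ℕ) :
    μ (k + 1) - μ k = V (k + 1) / σL * (l k - μ k) + V (k + 1) / σB * (b k - μ k) := by
  have hD := (one_add_div_add_div_pos (variance_pos h0 hL hB hV k).le hL hB).ne'
  rw [hμ, gaussian_update_sub_mean hD, hV, div_right_comm (V k) _ σL, div_right_comm (V k) _ σB,
    add_div, mul_div_right_comm, mul_div_right_comm (V k / σB)]

end BayesianUpdate

/-- The velocity mean muV(k) equals a fraction of the previous velocity mean
plus terms proportional to the change of the distances between the current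
position and the personal and global best positions. -/
theorem velocity_mean_distance_form (sigma0 sigmaL2 sigmaB2 : ℝ)
    (h0 : 0 < sigma0) (hL : 0 < sigmaL2) (hB : 0 < sigmaB2)
    (V : ℕ → ℝ) (hV0 : V 0 = sigma0)
    (hVk : ∀ k : ℕ, 1 ≤ k →
      V k = V (k - 1) / (1 + V (k - 1) / sigmaL2 + V (k - 1) / sigmaB2))
    (l b mu : ℕ → ℝ)
    (hmu : ∀ k : ℕ, 1 ≤ k →
      mu k = (mu (k - 1) + (V (k - 1) / sigmaL2) * l (k - 1) +
          (V (k - 1) / sigmaB2) * b (k - 1)) /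
        (1 + V (k - 1) / sigmaL2 + V (k - 1) / sigmaB2))
    (muV : ℕ → ℝ) (hmuV : ∀ k : ℕ, 1 ≤ k → muV k = mu k - mu (k - 1)) :
    ∀ k : ℕ, 2 ≤ k →
      muV k =
        (1 / (1 + V (k - 1) / sigmaL2 + V (k - 1) / sigmaB2)) * muV (k - 1) +
          ((V (k - 1) / sigmaL2) /
              (1 + V (k - 1) / sigmaL2 + V (k - 1) / sigmaB2)) *
            ((l (k - 1) - mu (k - 1)) - (l (k - 2) - mu (k - 2))) +
          ((V (k - 1) / sigmaB2) /
              (1 + V (k - 1) / sigmaL2 + V (k - 1) / sigmaB2)) *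
            ((b (k - 1) - mu (k - 1)) - (b (k - 2) - mu (k - 2))) := by
  have hV : ∀ k, V (k + 1) = V k / (1 + V k / sigmaL2 + V k / sigmaB2) :=
    fun k => hVk (k + 1) k.succ_pos
  have hμ : ∀ k, mu (k + 1) = (mu k + V k / sigmaL2 * l k + V k / sigmaB2 * b k) /
      (1 + V k / sigmaL2 + V k / sigmaB2) :=
    fun k => hmu (k + 1) k.succ_pos
  have hV₀ : 0 < V 0 := hV0 ▸ h0
  have hΔ : ∀ k, muV (k + 1) = mu (k + 1) - mu k := fun k => hmuV (k + 1) k.succ_pos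
  intro k hk
  obtain ⟨m, rfl⟩ : ∃ m, k = m + 1 + 1 := ⟨k - 2, by omega⟩
  have hD := (one_add_div_add_div_pos (variance_pos hV₀ hL hB hV (m + 1)).le hL hB).ne'
  simp only [Nat.add_sub_cancel, show m + 1 + 1 - 2 = m from rfl]
  rw [hΔ (m + 1), hΔ m, mean_succ_sub hV₀ hL hB hV hμ m, hμ (m + 1),
    gaussian_update_sub_mean hD]
  exact update_eq_momentum_add_distance_changes _ _ _ _ _ _
end

section
/- Let sigma0, sigmaL2, sigmaB2 be positive reals, h a natural number with h >= 1, and x, l, b reals with l - x >= 0 and b - x >= 0. Set deltaL = sigma0/(sigmaL2 + h * sigma0 * (1 + sigmaL2/sigmaB2)) and deltaB = sigma0/(sigmaB2 + h * sigma0 * (1 + sigmaB2/sigmaL2)), and let muV = (deltaL * (l - x) + deltaB * (b - x))/(1 + deltaL + deltaB). Then 0 <= muV <= (1/(h * (1 + sigmaL2/sigmaB2))) * (l - x) + (1/(h * (1 + sigmaB2/sigmaL2))) * (b - x). -/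
/-!
The denominator `1 + δL + δB` is at least `1` and both relative precisions are nonnegative, so
`μV` lies between `0` and `δL (l - x) + δB (b - x)`. Dropping the likelihood variance from the
denominator of a relative precision gives `δ ≤ σ₀ / (h σ₀ (1 + σ / σ')) = 1 / (h (1 + σ / σ'))`.
-/

/-- In the paper's notation `δL = relPrecision σ₀ σL² σB² h` and `δB = relPrecision σ₀ σB² σL² h`. -/
noncomputable def relPrecision (σ₀ σ σ' : ℝ) (h : ℕ) : ℝ :=
  σ₀ / (σ + (h : ℝ) * σ₀ * (1 + σ / σ'))

theorem relPrecision_nonneg {σ₀ σ σ' : ℝ} (h₀ : 0 ≤ σ₀) (hσ : 0 ≤ σ) (hσ' : 0 ≤ σ') (h : ℕ) :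
    0 ≤ relPrecision σ₀ σ σ' h := by
  unfold relPrecision
  positivity

theorem relPrecision_le {σ₀ σ σ' : ℝ} (h₀ : 0 < σ₀) (hσ : 0 ≤ σ) (hσ' : 0 ≤ σ') {h : ℕ}
    (hh : 1 ≤ h) : relPrecision σ₀ σ σ' h ≤ 1 / ((h : ℝ) * (1 + σ / σ')) := by
  have hk : 0 < (h : ℝ) * (1 + σ / σ') := by
    have : (0 : ℝ) < h := by exact_mod_cast hh
    positivity
  calc σ₀ / (σ + (h : ℝ) * σ₀ * (1 + σ / σ'))
      ≤ σ₀ / ((h : ℝ) * (1 + σ / σ') * σ₀) := by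
        gcongr
        linarith [mul_right_comm (h : ℝ) σ₀ (1 + σ / σ')]
    _ = 1 / ((h : ℝ) * (1 + σ / σ')) := by field_simp

section ShrunkMean

variable {a b u v : ℝ}

theorem shrunk_mean_nonneg (ha : 0 ≤ a) (hb : 0 ≤ b) (hu : 0 ≤ u) (hv : 0 ≤ v) :
    0 ≤ (a * u + b * v) / (1 + a + b) := by
  positivity

theorem shrunk_mean_le {A B : ℝ} (ha : 0 ≤ a) (hb : 0 ≤ b) (haA : a ≤ A) (hbB : b ≤ B)
    (hu : 0 ≤ u) (hv : 0 ≤ v) : (a * u + b * v) / (1 + a + b) ≤ A * u + B * v :=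
  calc (a * u + b * v) / (1 + a + b)
      ≤ a * u + b * v := div_le_self (by positivity) (by linarith)
    _ ≤ A * u + B * v := by gcongr

end ShrunkMean

/-- Bounds for the velocity mean when the cognitive and social components are
nonnegative. -/
theorem velocity_mean_bounds (sigma0 sigmaL2 sigmaB2 : ℝ)
    (h0 : 0 < sigma0) (hL : 0 < sigmaL2) (hB : 0 < sigmaB2)
    (h : ℕ) (hh : 1 ≤ h) (x l b : ℝ) (hlx : 0 ≤ l - x) (hbx : 0 ≤ b - x) :
    0 ≤ ((sigma0 / (sigmaL2 + (h : ℝ) * sigma0 * (1 + sigmaL2 / sigmaB2))) * (l - x) +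
          (sigma0 / (sigmaB2 + (h : ℝ) * sigma0 * (1 + sigmaB2 / sigmaL2))) * (b - x)) /
        (1 + sigma0 / (sigmaL2 + (h : ℝ) * sigma0 * (1 + sigmaL2 / sigmaB2)) +
          sigma0 / (sigmaB2 + (h : ℝ) * sigma0 * (1 + sigmaB2 / sigmaL2))) ∧
    ((sigma0 / (sigmaL2 + (h : ℝ) * sigma0 * (1 + sigmaL2 / sigmaB2))) * (l - x) +
          (sigma0 / (sigmaB2 + (h : ℝ) * sigma0 * (1 + sigmaB2 / sigmaL2))) * (b - x)) /
        (1 + sigma0 / (sigmaL2 + (h : ℝ) * sigma0 * (1 + sigmaL2 / sigmaB2)) +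
          sigma0 / (sigmaB2 + (h : ℝ) * sigma0 * (1 + sigmaB2 / sigmaL2))) ≤
      (1 / ((h : ℝ) * (1 + sigmaL2 / sigmaB2))) * (l - x) +
        (1 / ((h : ℝ) * (1 + sigmaB2 / sigmaL2))) * (b - x) := by
  have hδL := relPrecision_nonneg h0.le hL.le hB.le h
  have hδB := relPrecision_nonneg h0.le hB.le hL.le h
  exact ⟨shrunk_mean_nonneg hδL hδB hlx hbx,
    shrunk_mean_le hδL hδB (relPrecision_le h0 hL.le hB.le hh)
      (relPrecision_le h0 hB.le hL.le hh) hlx hbx⟩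
end
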